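/- arXiv:2008.06184 — 2 statements merged into one kernel-verified Lean document; each statement's English description precedes it below -/
import Mathlib

section
/- Suppose f : dom X → dom X' satisfies the positive homogeneity condition and has the form f(s) = (f^0(s)/L^0(s))·L(s), where L : ℝ^{d+1} → ℝ^{d'+1} is linear, L^0 (first coordinate of L) and f^0 are strictly positive on {s^0 > 0}, and f^0 satisfies the same homogeneity condition. Then the induced map F (with F ∘ X = X' ∘ f) equals a fractional-linear map F(x) = (b + A(x))/(a_{00} + B(x)) with positive denominator on Im X, and in particular F is strict inversely convexity preserving. -/
/-!
Since `f s` is a positive multiple of `L s` and the perspective function is invariant under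
nonzero scaling, `X' (f s) = X' (L s)`. Writing `s = s⁰ • (1, x)` with `x = X s`, this is
`X' (L (1, x))`, a ratio of affine functions of `x` whose denominator `L⁰ (1, x)` is positive.
A map `z ↦ (B z + c)⁻¹ • (A z + b)` with positive denominator sends the point `t x + t' y` of
`]x, y[` to the point of the image segment with weights proportional to `t (B x + c)` and
`t' (B y + c)`.
-/

/-- The perspective function `X(s) = (s^1/s^0, ..., s^d/s^0)` on `{s : s^0 > 0}`. -/
noncomputable def persp (d : ℕ) (s : Fin (d + 1) → ℝ) : Fin d → ℝ := fun i => s i.succ / s 0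

theorem inv_smul_add_mem_openSegment {E : Type*} [AddCommGroup E] [Module ℝ E]
    {p q a b : ℝ} (hp : 0 < p) (hq : 0 < q) (ha : 0 < a) (hb : 0 < b) (u v : E) :
    (a * p + b * q)⁻¹ • (a • u + b • v) ∈ openSegment ℝ (p⁻¹ • u) (q⁻¹ • v) := by
  have hD : 0 < a * p + b * q := by positivity
  refine ⟨a * p / (a * p + b * q), b * q / (a * p + b * q), by positivity, by positivity,
    by field_simp, ?_⟩
  match_scalars <;> field_simp

theorem image_openSegment_subset_of_fractionalLinear {E F : Type*} [AddCommGroup E] [Module ℝ E]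
    [AddCommGroup F] [Module ℝ F] (A : E →ₗ[ℝ] F) (B : E →ₗ[ℝ] ℝ) (b : F) (c : ℝ) {x y : E}
    (hx : 0 < B x + c) (hy : 0 < B y + c) :
    (fun z => (B z + c)⁻¹ • (A z + b)) '' openSegment ℝ x y ⊆
      openSegment ℝ ((B x + c)⁻¹ • (A x + b)) ((B y + c)⁻¹ • (A y + b)) := by
  rintro _ ⟨_, ⟨t, t', ht, ht', hsum, rfl⟩, rfl⟩
  have hden : B (t • x + t' • y) + c = t * (B x + c) + t' * (B y + c) := by
    simp only [map_add, map_smul, smul_eq_mul]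
    linear_combination (-c) * hsum
  have hnum : A (t • x + t' • y) + b = t • (A x + b) + t' • (A y + b) := by
    simp only [map_add, map_smul]
    linear_combination (norm := module) (-hsum) • b
  dsimp only
  rw [hden, hnum]
  exact inv_smul_add_mem_openSegment hx hy ht ht' _ _

section Perspective

variable {d d' : ℕ}

theorem persp_eq_inv_smul_tail (s : Fin (d + 1) → ℝ) : persp d s = (s 0)⁻¹ • Fin.tail s := by
  funext i
  simp [persp, Fin.tail, div_eq_inv_mul]

theorem persp_smul {k : ℝ} (hk : k ≠ 0) (s : Fin (d + 1) → ℝ) : persp d (k • s) = persp d s := by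
  funext i
  simp [persp, mul_div_mul_left _ _ hk]

theorem smul_cons_one_persp {s : Fin (d + 1) → ℝ} (hs : s 0 ≠ 0) :
    s 0 • (Fin.cons 1 (persp d s) : Fin (d + 1) → ℝ) = s := by
  funext j
  refine Fin.cases ?_ (fun i => ?_) j <;> simp [persp, mul_div_cancel₀ _ hs]

namespace LinearMap

variable (L : (Fin (d + 1) → ℝ) →ₗ[ℝ] (Fin (d' + 1) → ℝ))

def compConsZero : (Fin d → ℝ) →ₗ[ℝ] (Fin (d' + 1) → ℝ) :=
  L ∘ₗ (Fin.consLinearEquiv ℝ fun _ => ℝ).toLinearMap ∘ₗ inr ℝ ℝ (Fin d → ℝ)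

def perspNumLinear : (Fin d → ℝ) →ₗ[ℝ] (Fin d' → ℝ) :=
  funLeft ℝ ℝ Fin.succ ∘ₗ compConsZero L

def perspDenLinear : (Fin d → ℝ) →ₗ[ℝ] ℝ := proj 0 ∘ₗ compConsZero L

def perspNumConst : Fin d' → ℝ := Fin.tail (L (Fin.cons 1 0))

def perspDenConst : ℝ := L (Fin.cons 1 0) 0

theorem map_cons_one (x : Fin d → ℝ) :
    L (Fin.cons 1 x) = L (Fin.cons 1 0) + compConsZero L x := by
  show L _ = L _ + L (Fin.cons 0 x)
  rw [← map_add]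
  congr 1
  funext j
  refine Fin.cases ?_ (fun i => ?_) j <;> simp

theorem perspDenLinear_add_perspDenConst (x : Fin d → ℝ) :
    perspDenLinear L x + perspDenConst L = L (Fin.cons 1 x) 0 := by
  rw [map_cons_one, add_comm]
  rfl

theorem perspNumLinear_add_perspNumConst (x : Fin d → ℝ) :
    perspNumLinear L x + perspNumConst L = Fin.tail (L (Fin.cons 1 x)) := by
  rw [map_cons_one, add_comm]
  rfl

theorem persp_map {s : Fin (d + 1) → ℝ} (hs : s 0 ≠ 0) :
    persp d' (L s) = (perspDenLinear L (persp d s) + perspDenConst L)⁻¹ •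
      (perspNumLinear L (persp d s) + perspNumConst L) := by
  rw [perspDenLinear_add_perspDenConst, perspNumLinear_add_perspNumConst,
    ← persp_eq_inv_smul_tail]
  conv_lhs => rw [← smul_cons_one_persp hs, map_smul, persp_smul hs]

end LinearMap

end Perspective

theorem fractional_form_induces_sicp_general {d d' : ℕ}
    (L : (Fin (d + 1) → ℝ) →ₗ[ℝ] (Fin (d' + 1) → ℝ))
    (f0 : (Fin (d + 1) → ℝ) → ℝ)
    (hL0 : ∀ s : Fin (d + 1) → ℝ, 0 < s 0 → 0 < L s 0)
    (hf0 : ∀ s : Fin (d + 1) → ℝ, 0 < s 0 → 0 < f0 s)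
    (f : (Fin (d + 1) → ℝ) → (Fin (d' + 1) → ℝ))
    (hf : ∀ s : Fin (d + 1) → ℝ, 0 < s 0 → f s = (f0 s / L s 0) • L s) :
    ∃ (A : (Fin d → ℝ) →ₗ[ℝ] (Fin d' → ℝ)) (B : (Fin d → ℝ) →ₗ[ℝ] ℝ)
      (b : Fin d' → ℝ) (c : ℝ),
      (∀ x ∈ persp d '' {s : Fin (d + 1) → ℝ | 0 < s 0}, 0 < B x + c) ∧
      (∀ s : Fin (d + 1) → ℝ, 0 < s 0 →
        persp d' (f s) = (B (persp d s) + c)⁻¹ • (A (persp d s) + b)) ∧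
      (∀ x ∈ persp d '' {s : Fin (d + 1) → ℝ | 0 < s 0},
       ∀ y ∈ persp d '' {s : Fin (d + 1) → ℝ | 0 < s 0},
        (fun z => (B z + c)⁻¹ • (A z + b)) '' openSegment ℝ x y ⊆
          openSegment ℝ ((B x + c)⁻¹ • (A x + b)) ((B y + c)⁻¹ • (A y + b))) := by
  have hden (x : Fin d → ℝ) : 0 < L.perspDenLinear x + L.perspDenConst := by
    rw [L.perspDenLinear_add_perspDenConst]
    exact hL0 _ zero_lt_one
  refine ⟨L.perspNumLinear, L.perspDenLinear, L.perspNumConst, L.perspDenConst,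
    fun x _ => hden x, fun s hs => ?_,
    fun x _ y _ => image_openSegment_subset_of_fractionalLinear _ _ _ _ (hden x) (hden y)⟩
  rw [hf s hs, persp_smul (div_pos (hf0 s hs) (hL0 s hs)).ne', L.persp_map hs.ne']

/-- If `f(s) = (f⁰(s)/L⁰(s))·L(s)` with `L` linear and `f⁰, L⁰ > 0` on `{s⁰ > 0}`
(`f⁰` positively homogeneous), then the induced map `F` (with `F ∘ X = X' ∘ f`) is a
fractional-linear map with positive denominator, hence strict inversely convexity
preserving. -/
theorem fractional_form_induces_sicp {d d' : ℕ}
    (L : (Fin (d + 1) → ℝ) →ₗ[ℝ] (Fin (d' + 1) → ℝ))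
    (f0 : (Fin (d + 1) → ℝ) → ℝ)
    (hL0 : ∀ s : Fin (d + 1) → ℝ, 0 < s 0 → 0 < L s 0)
    (hf0 : ∀ s : Fin (d + 1) → ℝ, 0 < s 0 → 0 < f0 s)
    (hhom0 : ∀ s : Fin (d + 1) → ℝ, 0 < s 0 → ∀ l : ℝ, 0 < l →
      ∃ μ : ℝ, 0 < μ ∧ f0 (l • s) = μ * f0 s)
    (f : (Fin (d + 1) → ℝ) → (Fin (d' + 1) → ℝ))
    (hf : ∀ s : Fin (d + 1) → ℝ, 0 < s 0 → f s = (f0 s / L s 0) • L s) :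
    ∃ (A : (Fin d → ℝ) →ₗ[ℝ] (Fin d' → ℝ)) (B : (Fin d → ℝ) →ₗ[ℝ] ℝ)
      (b : Fin d' → ℝ) (c : ℝ),
      (∀ x ∈ persp d '' {s : Fin (d + 1) → ℝ | 0 < s 0}, 0 < B x + c) ∧
      (∀ s : Fin (d + 1) → ℝ, 0 < s 0 →
        persp d' (f s) = (B (persp d s) + c)⁻¹ • (A (persp d s) + b)) ∧
      (∀ x ∈ persp d '' {s : Fin (d + 1) → ℝ | 0 < s 0},
       ∀ y ∈ persp d '' {s : Fin (d + 1) → ℝ | 0 < s 0},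
        (fun z => (B z + c)⁻¹ • (A z + b)) '' openSegment ℝ x y ⊆
          openSegment ℝ ((B x + c)⁻¹ • (A x + b)) ((B y + c)⁻¹ • (A y + b))) :=
  fractional_form_induces_sicp_general L f0 hL0 hf0 f hf
end

section
/- Change-of-numeraire invariance of the 0-neutral property: let E ⊆ {s ∈ ℝ^{d+1} : s^0 > 0, s^1 > 0} and s ∈ E. If X(s) ∈ cl(co(X(E))), then Y(s) ∈ cl(co(Y(E))), where X(s) = (s^1/s^0, s^2/s^0, ..., s^d/s^0) and Y(s) = (s^0/s^1, s^2/s^1, ..., s^d/s^1). -/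
/-- The perspective function w.r.t. the second coordinate:
`Y(s) = (s^0/s^1, s^2/s^1, ..., s^d/s^1)`. -/
noncomputable def perspY (d : ℕ) (s : Fin (d + 2) → ℝ) : Fin (d + 1) → ℝ :=
  fun i => (if i = 0 then s 0 else s i.succ) / s 1

/-! With `z = X(s)` one has `Y(s) = g z := z⁰⁻¹ • (1, z¹, …, zᵈ)`. On the half-space `{z⁰ > 0}`
the map `g` is continuous and pulls convex sets back to convex sets, because `z ↦ z⁰ • g z` is
affine there. Such a map sends a point of `cl(co A)` lying in its domain into `cl(co g(A))`: the
pull-back of the closed convex set `cl(co g(A))` is convex, contains `A`, and is relatively closed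
in the domain. -/

open Set

theorem mem_closure_convexHull_image_of_convex_preimage {E F : Type*}
    [AddCommGroup E] [Module ℝ E] [TopologicalSpace E]
    [AddCommGroup F] [Module ℝ F] [TopologicalSpace F] [IsTopologicalAddGroup F]
    [ContinuousSMul ℝ F] {D : Set E} {g : E → F} (hg : ContinuousOn g D)
    (hconv : ∀ K : Set F, Convex ℝ K → Convex ℝ (D ∩ g ⁻¹' K)) {A : Set E} (hA : A ⊆ D)
    {p : E} (hpD : p ∈ D) (hp : p ∈ closure (convexHull ℝ A)) :
    g p ∈ closure (convexHull ℝ (g '' A)) := by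
  let K := closure (convexHull ℝ (g '' A))
  have hAK : A ⊆ D ∩ g ⁻¹' K := fun a ha =>
    ⟨hA ha, subset_closure (subset_convexHull ℝ _ (mem_image_of_mem g ha))⟩
  have hpK : p ∈ closure (D ∩ g ⁻¹' K) :=
    closure_mono (convexHull_min hAK (hconv K (convex_convexHull ℝ _).closure)) hp
  have hgp : g p ∈ closure K :=
    ((hg p hpD).mono inter_subset_left).mem_closure hpK fun _ hx => hx.2
  rwa [closure_closure] at hgp

section ChangeNumeraire

variable {ι : Type*} [DecidableEq ι] (i : ι)

/-- Prices `z` re-expressed in units of asset `i`; the old numeraire takes slot `i`, with price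
`1 / z i`. -/
noncomputable def changeNumeraire (z : ι → ℝ) : ι → ℝ := (z i)⁻¹ • Function.update z i 1

theorem smul_changeNumeraire {z : ι → ℝ} (hz : z i ≠ 0) :
    z i • changeNumeraire i z = Function.update z i 1 := by
  rw [changeNumeraire, smul_inv_smul₀ hz]

theorem continuousOn_changeNumeraire : ContinuousOn (changeNumeraire i) {z | z i ≠ 0} := by
  have hupdate : Continuous fun z : ι → ℝ => Function.update z i 1 :=
    continuous_id.update i continuous_const
  exact ((continuous_apply i).continuousOn.inv₀ fun _ hz => hz).smul hupdate.continuousOn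

theorem convex_inter_preimage_changeNumeraire {K : Set (ι → ℝ)} (hK : Convex ℝ K) :
    Convex ℝ ({z | 0 < z i} ∩ changeNumeraire i ⁻¹' K) := by
  rintro z ⟨hz : 0 < z i, hzK⟩ w ⟨hw : 0 < w i, hwK⟩ a b ha hb hab
  have hc : 0 < (a • z + b • w) i :=
    convex_halfSpace_gt (LinearMap.proj i : (ι → ℝ) →ₗ[ℝ] ℝ).isLinear 0 hz hw ha hb hab
  refine ⟨hc, ?_⟩
  have hupdate : Function.update (a • z + b • w) i 1 =
      a • Function.update z i 1 + b • Function.update w i 1 := by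
    ext j
    rcases eq_or_ne j i with rfl | hj
    · simp [hab]
    · simp [hj]
  have hcombo : changeNumeraire i (a • z + b • w) =
      (a * z i / (a • z + b • w) i) • changeNumeraire i z +
        (b * w i / (a • z + b • w) i) • changeNumeraire i w := by
    rw [← smul_right_inj hc.ne', smul_changeNumeraire i hc.ne', hupdate,
      ← smul_changeNumeraire i hz.ne', ← smul_changeNumeraire i hw.ne']
    simp only [smul_add, smul_smul]
    congr 2 <;> field_simp
  rw [mem_preimage, hcombo]
  refine hK hzK hwK (by positivity) (by positivity) ?_
  rw [← add_div, div_eq_one_iff_eq hc.ne']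
  simp

end ChangeNumeraire

theorem changeNumeraire_persp {d : ℕ} {s : Fin (d + 2) → ℝ} (hs : s 0 ≠ 0) :
    changeNumeraire 0 (persp (d + 1) s) = perspY d s := by
  ext j
  rcases eq_or_ne j 0 with rfl | hj
  · simp [changeNumeraire, persp, perspY]
  · simp only [changeNumeraire, persp, perspY, Fin.succ_zero_eq_one, inv_div, Pi.smul_apply,
      Function.update_of_ne hj, smul_eq_mul, if_neg hj]
    field_simp

/-- Change-of-numeraire invariance of the `0`-neutral property. -/
theorem change_numeraire_zero_neutral {d : ℕ} (E : Set (Fin (d + 2) → ℝ))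
    (hE : E ⊆ {s : Fin (d + 2) → ℝ | 0 < s 0 ∧ 0 < s 1})
    (s : Fin (d + 2) → ℝ) (hs : s ∈ E)
    (h : persp (d + 1) s ∈ closure (convexHull ℝ (persp (d + 1) '' E))) :
    perspY d s ∈ closure (convexHull ℝ (perspY d '' E)) := by
  have hXE : persp (d + 1) '' E ⊆ {z | 0 < z 0} := by
    rintro _ ⟨e, he, rfl⟩
    exact div_pos (hE he).2 (hE he).1
  have hY : EqOn (fun e => changeNumeraire 0 (persp (d + 1) e)) (perspY d) E := fun e he =>
    changeNumeraire_persp (hE he).1.ne'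
  have key := mem_closure_convexHull_image_of_convex_preimage
    ((continuousOn_changeNumeraire 0).mono fun _ hz => ne_of_gt hz)
    (fun _ hK => convex_inter_preimage_changeNumeraire 0 hK) hXE (hXE (mem_image_of_mem _ hs)) h
  rwa [image_image, hY.image_eq, changeNumeraire_persp (hE hs).1.ne'] at key
end
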